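/- arXiv:1909.12094 — 4 statements merged into one kernel-verified Lean document; each statement's English description precedes it below -/
import Mathlib

section
/- Let G be a group, H ≤ G a subgroup, and η ∈ Z(H) such that {g⁻¹ η g : g ∈ G} generates G. Then the set H\G of right cosets is a quandle under the operation Hg ▷ Hγ := H g γ⁻¹ η γ, and this quandle is connected. -/
/-! Common setup: quandles with the right-action conventions of Joyce and of
Braun–Crotwell–Liu–Weston–Yetter.  The inner automorphism group is realized
inside the opposite of the permutation group, so that it acts on `Q` on the
right (the product `g * h` means "first `g`, then `h`"). -/

open MulOpposite

structure QuandleStr (Q : Type*) where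
  act : Q → Q → Q               -- x ▷ y
  inv : Q → Q → Q               -- x ▷⁻¹ y
  idem : ∀ x, act x x = x
  inv_act : ∀ x y, inv (act x y) y = x
  act_inv : ∀ x y, act (inv x y) y = x
  distrib : ∀ x y z, act (act x y) z = act (act x z) (act y z)

namespace QuandleStr

variable {Q : Type*} (S : QuandleStr Q)

/-- The symmetry `S_x : y ↦ y ▷ x`, as a permutation of `Q`. -/
def sym (x : Q) : Equiv.Perm Q where
  toFun y := S.act y x
  invFun y := S.inv y x
  left_inv y := S.inv_act y x
  right_inv y := S.act_inv y x

/-- The inner automorphism group `Inn(Q)`: the subgroup generated by the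
symmetries, with right-to-left composition (opposite permutation group). -/
def Inn : Subgroup (Equiv.Perm Q)ᵐᵒᵖ :=
  Subgroup.closure (Set.range fun x => op (S.sym x))

/-- The right action `q · g` of `Inn(Q)` on `Q`. -/
def ract (q : Q) (g : S.Inn) : Q := (unop (g : (Equiv.Perm Q)ᵐᵒᵖ)) q

lemma ract_one (q : Q) : S.ract q 1 = q := rfl

lemma ract_mul (q : Q) (g h : S.Inn) :
    S.ract q (g * h) = S.ract (S.ract q g) h := rfl

/-- `S_x` as an element of `Inn(Q)`. -/
def symInn (x : Q) : S.Inn :=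
  ⟨op (S.sym x), Subgroup.subset_closure ⟨x, rfl⟩⟩

/-- The stabilizer of `q` in `Inn(Q)`. -/
def stab (q : Q) : Subgroup S.Inn where
  carrier := {g | S.ract q g = q}
  one_mem' := rfl
  mul_mem' := by
    intro a b ha hb
    simp only [Set.mem_setOf_eq] at *
    rw [ract_mul, ha, hb]
  inv_mem' := by
    intro a ha
    simp only [Set.mem_setOf_eq] at *
    conv_lhs => rw [← ha, ← ract_mul]
    simp [ract_one]

/-- A quandle is connected iff `Inn(Q)` acts transitively. -/
def Connected : Prop := ∀ a b : Q, ∃ g : S.Inn, S.ract a g = b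

/-- The orbit equivalence relation on `Q` induced by a subgroup `N ≤ Inn(Q)`. -/
def orbRel (N : Subgroup S.Inn) : Setoid Q where
  r a b := ∃ n : N, S.ract a ↑n = b
  iseqv := by
    constructor
    · exact fun a => ⟨1, rfl⟩
    · rintro a b ⟨n, rfl⟩
      refine ⟨n⁻¹, ?_⟩
      rw [← ract_mul]
      simp [ract_one]
    · rintro a b c ⟨n, rfl⟩ ⟨m, rfl⟩
      exact ⟨n * m, (S.ract_mul a ↑n ↑m).symm⟩

end QuandleStr

section Aux

variable {G : Type*} [Group G] (H : Subgroup G)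

/-- The coset operation `Hg ▷ Hγ = H g γ⁻¹ e γ`, well-defined when `e`
centralizes `H`. -/
def qact (e : G) (hc : ∀ h ∈ H, e * h = h * e)
    (x y : Quotient (QuotientGroup.rightRel H)) :
    Quotient (QuotientGroup.rightRel H) :=
  Quotient.liftOn₂ x y
    (fun g γ => Quotient.mk (QuotientGroup.rightRel H) (g * γ⁻¹ * e * γ))
    (by
      intro a₁ a₂ b₁ b₂ h₁ h₂
      replace h₁ := QuotientGroup.rightRel_apply.mp h₁
      replace h₂ := QuotientGroup.rightRel_apply.mp h₂
      refine Quotient.sound (QuotientGroup.rightRel_apply.mpr ?_)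
      have key : b₂⁻¹ * e * b₂ = a₂⁻¹ * e * a₂ := by
        have : b₂ * a₂⁻¹ * e = e * (b₂ * a₂⁻¹) := (hc _ h₂).symm
        calc b₂⁻¹ * e * b₂ = b₂⁻¹ * (e * (b₂ * a₂⁻¹)) * a₂ := by group
          _ = b₂⁻¹ * (b₂ * a₂⁻¹ * e) * a₂ := by rw [this]
          _ = a₂⁻¹ * e * a₂ := by group
      have : b₁ * b₂⁻¹ * e * b₂ * (a₁ * a₂⁻¹ * e * a₂)⁻¹
          = b₁ * a₁⁻¹ := by
        calc b₁ * b₂⁻¹ * e * b₂ * (a₁ * a₂⁻¹ * e * a₂)⁻¹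
            = b₁ * (b₂⁻¹ * e * b₂) * (a₁ * (a₂⁻¹ * e * a₂))⁻¹ := by group
          _ = b₁ * (a₂⁻¹ * e * a₂) * (a₁ * (a₂⁻¹ * e * a₂))⁻¹ := by rw [key]
          _ = b₁ * a₁⁻¹ := by group
      rw [this]; exact h₁)

lemma qact_mk (e : G) (hc : ∀ h ∈ H, e * h = h * e) (g γ : G) :
    qact H e hc (Quotient.mk (QuotientGroup.rightRel H) g)
      (Quotient.mk (QuotientGroup.rightRel H) γ) =
      Quotient.mk (QuotientGroup.rightRel H) (g * γ⁻¹ * e * γ) := rfl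

end Aux

/-- Given `H ≤ G` and `η ∈ Z(H)` whose conjugates generate `G`,
the set of right cosets `H\G` is a quandle under `Hg ▷ Hγ = H g γ⁻¹ η γ`, and
this quandle is connected. -/
theorem coset_quandle_construction {G : Type*} [Group G] (H : Subgroup G) (η : G)
    (hηH : η ∈ H) (hcomm : ∀ h ∈ H, η * h = h * η)
    (hgen : Subgroup.closure {x : G | ∃ g : G, x = g⁻¹ * η * g} = ⊤) :
    ∃ Qs : QuandleStr (Quotient (QuotientGroup.rightRel H)),
      (∀ g γ : G,
        Qs.act (Quotient.mk (QuotientGroup.rightRel H) g)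
            (Quotient.mk (QuotientGroup.rightRel H) γ) =
          Quotient.mk (QuotientGroup.rightRel H) (g * γ⁻¹ * η * γ)) ∧
      Qs.Connected := by
  classical
  have hcomm' : ∀ h ∈ H, η⁻¹ * h = h * η⁻¹ := by
    intro h hh
    calc η⁻¹ * h = η⁻¹ * (h * η) * η⁻¹ := by group
      _ = η⁻¹ * (η * h) * η⁻¹ := by rw [hcomm h hh]
      _ = h * η⁻¹ := by group
  let mk : G → Quotient (QuotientGroup.rightRel H) :=
    Quotient.mk (QuotientGroup.rightRel H)
  let Qs : QuandleStr (Quotient (QuotientGroup.rightRel H)) :=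
    { act := qact H η hcomm
      inv := qact H η⁻¹ hcomm'
      idem := by
        intro x
        induction x using Quotient.inductionOn with
        | h g =>
          refine Quotient.sound (QuotientGroup.rightRel_apply.mpr ?_)
          have : g * (g * g⁻¹ * η * g)⁻¹ = η⁻¹ := by group
          rw [this]; exact inv_mem hηH
      inv_act := by
        intro x y
        induction x, y using Quotient.inductionOn₂ with
        | h g γ => exact congrArg (Quotient.mk _) (by group)
      act_inv := by
        intro x y
        induction x, y using Quotient.inductionOn₂ with
        | h g γ => exact congrArg (Quotient.mk _) (by group)
      distrib := by
        intro x y z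
        induction x using Quotient.inductionOn with
        | h g =>
          induction y, z using Quotient.inductionOn₂ with
          | h γ ζ => exact congrArg (Quotient.mk _) (by group) }
  refine ⟨Qs, fun g γ => rfl, ?_⟩
  have key : ∀ x : G, ∃ g : Qs.Inn, ∀ c : G, Qs.ract (mk c) g = mk (c * x) := by
    let K : Subgroup G :=
      { carrier := {x | ∃ g : Qs.Inn, ∀ c : G, Qs.ract (mk c) g = mk (c * x)}
        one_mem' := ⟨1, fun c => by rw [mul_one]; rfl⟩
        mul_mem' := by
          rintro x y ⟨gx, hx⟩ ⟨gy, hy⟩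
          exact ⟨gx * gy, fun c => by
            rw [Qs.ract_mul, hx, hy, mul_assoc]⟩
        inv_mem' := by
          rintro x ⟨gx, hx⟩
          refine ⟨gx⁻¹, fun c => ?_⟩
          have h1 := hx (c * x⁻¹)
          rw [inv_mul_cancel_right] at h1
          rw [← h1, ← Qs.ract_mul]
          simp [Qs.ract_one] }
    have hsub : {x : G | ∃ g : G, x = g⁻¹ * η * g} ⊆ K := by
      rintro x ⟨γ, rfl⟩
      refine ⟨Qs.symInn (mk γ), fun c => ?_⟩
      show Qs.act (mk c) (mk γ) = mk (c * (γ⁻¹ * η * γ))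
      exact congrArg (Quotient.mk _) (by group)
    have hle : Subgroup.closure {x : G | ∃ g : G, x = g⁻¹ * η * g} ≤ K :=
      (Subgroup.closure_le K).2 hsub
    intro x
    have hx : x ∈ K := hle (hgen ▸ Subgroup.mem_top x)
    exact hx
  intro a b
  induction a, b using Quotient.inductionOn₂ with
  | h a b =>
    obtain ⟨g, hg⟩ := key (a⁻¹ * b)
    exact ⟨g, by rw [hg, mul_inv_cancel_left]⟩
end

section
/- In the coset quandle H\G with operation Hg ▷ Hγ = H g γ⁻¹ η γ (for η ∈ Z(H) whose conjugates generate G), if the right translation action of G on H\G is faithful, then Inn(H\G) is isomorphic to G; in general Inn(H\G) ≅ G/N where N = {g ∈ G : Hγg = Hγ for all γ ∈ G}. -/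
/-! Common setup: quandles with the right-action conventions of Joyce and of
Braun–Crotwell–Liu–Weston–Yetter.  The inner automorphism group is realized
inside the opposite of the permutation group, so that it acts on `Q` on the
right (the product `g * h` means "first `g`, then `h`"). -/

open MulOpposite

section Aux

variable {G : Type*} [Group G] (H : Subgroup G)

private def rtPerm (g : G) : Equiv.Perm (Quotient (QuotientGroup.rightRel H)) where
  toFun := Quotient.map' (· * g) (fun a b h => by
    rw [QuotientGroup.rightRel_apply] at h ⊢
    simpa [mul_assoc] using h)
  invFun := Quotient.map' (· * g⁻¹) (fun a b h => by
    rw [QuotientGroup.rightRel_apply] at h ⊢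
    simpa [mul_assoc] using h)
  left_inv := by
    rintro ⟨γ⟩
    show Quotient.mk _ (γ * g * g⁻¹) = Quotient.mk _ γ
    rw [mul_inv_cancel_right]
  right_inv := by
    rintro ⟨γ⟩
    show Quotient.mk _ (γ * g⁻¹ * g) = Quotient.mk _ γ
    rw [inv_mul_cancel_right]

private lemma rtPerm_mk (g γ : G) :
    rtPerm H g (Quotient.mk (QuotientGroup.rightRel H) γ) =
      Quotient.mk (QuotientGroup.rightRel H) (γ * g) := rfl

private def rtHom : G →* (Equiv.Perm (Quotient (QuotientGroup.rightRel H)))ᵐᵒᵖ where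
  toFun g := MulOpposite.op (rtPerm H g)
  map_one' := by
    apply MulOpposite.unop_injective
    ext q
    induction q using Quotient.inductionOn' with
    | h γ =>
      show Quotient.mk _ (γ * 1) = Quotient.mk _ γ
      rw [mul_one]
  map_mul' g h := by
    apply MulOpposite.unop_injective
    ext q
    induction q using Quotient.inductionOn' with
    | h γ =>
      show Quotient.mk _ (γ * (g * h)) = Quotient.mk _ (γ * g * h)
      rw [mul_assoc]

end Aux

/-- For the coset quandle `H\G` with `Hg ▷ Hγ = H g γ⁻¹ η γ`:
if `G` acts faithfully on `H\G` by right translation then `Inn(H\G) ≅ G`;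
in general `Inn(H\G) ≅ G/N` with `N = {g : Hγg = Hγ for all γ}` (expressed by a
surjective homomorphism `G →* Inn(H\G)` whose kernel is `N`). -/
theorem inn_of_coset_quandle {G : Type*} [Group G] (H : Subgroup G) (η : G)
    (hηH : η ∈ H) (hcomm : ∀ h ∈ H, η * h = h * η)
    (hgen : Subgroup.closure {x : G | ∃ g : G, x = g⁻¹ * η * g} = ⊤)
    (Qs : QuandleStr (Quotient (QuotientGroup.rightRel H)))
    (hact : ∀ g γ : G,
      Qs.act (Quotient.mk (QuotientGroup.rightRel H) g)
          (Quotient.mk (QuotientGroup.rightRel H) γ) =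
        Quotient.mk (QuotientGroup.rightRel H) (g * γ⁻¹ * η * γ)) :
    ((∀ g : G, (∀ γ : G, Quotient.mk (QuotientGroup.rightRel H) (γ * g) =
          Quotient.mk (QuotientGroup.rightRel H) γ) → g = 1) →
        Nonempty (G ≃* Qs.Inn)) ∧
    (∃ φ : G →* Qs.Inn, Function.Surjective φ ∧
      (φ.ker : Set G) = {g : G | ∀ γ : G,
        Quotient.mk (QuotientGroup.rightRel H) (γ * g) =
          Quotient.mk (QuotientGroup.rightRel H) γ}) := by

  classical
  set mk : G → Quotient (QuotientGroup.rightRel H) :=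
    Quotient.mk (QuotientGroup.rightRel H) with hmk
  have mksurj : Function.Surjective mk := Quotient.mk_surjective
  -- each symmetry is a right translation
  have hsym : ∀ γ : G, op (Qs.sym (mk γ)) = rtHom H (γ⁻¹ * η * γ) := by
    intro γ
    congr 1
    ext q
    induction q using Quotient.inductionOn' with
    | h g =>
      show Qs.act (mk g) (mk γ) = rtPerm H (γ⁻¹ * η * γ) (mk g)
      rw [hact, rtPerm_mk]
      congr 1
      group
  -- rtHom lands in Inn
  have hmem : ∀ g : G, rtHom H g ∈ Qs.Inn := by
    intro g
    have : g ∈ Subgroup.closure {x : G | ∃ g : G, x = g⁻¹ * η * g} := by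
      rw [hgen]; trivial
    refine Subgroup.closure_induction (fun x hx => ?_) (by rw [map_one]; exact one_mem _)
      (fun a b _ _ ha hb => by
      rw [map_mul]; exact mul_mem ha hb) (fun a _ ha => by
      rw [map_inv]; exact inv_mem ha) this
    obtain ⟨γ, rfl⟩ := hx
    rw [← hsym]
    exact Subgroup.subset_closure ⟨mk γ, rfl⟩
  let φ : G →* Qs.Inn := (rtHom H).codRestrict Qs.Inn hmem
  have hφsurj : Function.Surjective φ := by
    intro x
    have hx : (x : (Equiv.Perm (Quotient (QuotientGroup.rightRel H)))ᵐᵒᵖ) ∈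
        Subgroup.closure (Set.range fun y => op (Qs.sym y)) := x.2
    have : (x : (Equiv.Perm (Quotient (QuotientGroup.rightRel H)))ᵐᵒᵖ) ∈ (rtHom H).range := by
      refine Subgroup.closure_induction (fun y hy => ?_) (one_mem _)
        (fun a b _ _ ha hb => mul_mem ha hb) (fun a _ ha => inv_mem ha) hx
      obtain ⟨q, rfl⟩ := hy
      obtain ⟨γ, rfl⟩ := mksurj q
      exact ⟨γ⁻¹ * η * γ, (hsym γ).symm⟩
    obtain ⟨g, hg⟩ := this
    exact ⟨g, Subtype.ext hg⟩
  have hker : ∀ g : G, φ g = 1 ↔ ∀ γ : G, mk (γ * g) = mk γ := by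
    intro g
    constructor
    · intro h γ
      have h1 : rtHom H g = 1 := congrArg Subtype.val h
      have h2 : rtPerm H g = 1 := congrArg MulOpposite.unop h1
      have h3 := congrArg (fun e : Equiv.Perm _ => e (mk γ)) h2
      exact h3
    · intro h
      apply Subtype.ext
      show rtHom H g = 1
      apply MulOpposite.unop_injective
      ext q
      induction q using Quotient.inductionOn' with
      | h γ =>
        show Quotient.mk _ (γ * g) = Quotient.mk _ γ
        exact h γ
  constructor
  · intro hfaith
    have hinj : Function.Injective φ := by
      rw [injective_iff_map_eq_one]
      intro g hg
      exact hfaith g ((hker g).mp hg)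
    exact ⟨MulEquiv.ofBijective φ ⟨hinj, hφsurj⟩⟩
  · refine ⟨φ, hφsurj, ?_⟩
    ext g
    simp only [SetLike.mem_coe, MonoidHom.mem_ker, Set.mem_setOf_eq]
    exact hker g
end

section
/- Let Q be a quandle with G = Inn(Q) and let N be a normal subgroup of G. Then the set Q/N of orbits of Q under the restricted action of N carries a quandle structure given by [q] ▷ [r] = [q ▷ r], and the orbit map Q → Q/N is a surjective quandle homomorphism. -/
/-! Common setup: quandles with the right-action conventions of Joyce and of
Braun–Crotwell–Liu–Weston–Yetter.  The inner automorphism group is realized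
inside the opposite of the permutation group, so that it acts on `Q` on the
right (the product `g * h` means "first `g`, then `h`"). -/

open MulOpposite

section Aux

open MulOpposite

variable {Q : Type*} (S : QuandleStr Q)

lemma ract_act (q x : Q) : S.ract q (S.symInn x) = S.act q x := rfl

lemma sym_swap (x z : Q) :
    op (S.sym x) * op (S.sym z) = op (S.sym z) * op (S.sym (S.act x z)) := by
  apply unop_injective
  ext q
  exact S.distrib q x z

lemma conj_sym (g : (Equiv.Perm Q)ᵐᵒᵖ) (hg : g ∈ S.Inn) (x : Q) :
    op (S.sym ((unop g) x)) = g⁻¹ * op (S.sym x) * g := by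
  induction hg using Subgroup.closure_induction generalizing x with
  | mem g hg =>
      obtain ⟨z, rfl⟩ := hg
      have h := sym_swap S x z
      show op (S.sym (S.act x z)) =
        (op (S.sym z))⁻¹ * (op (S.sym x) * op (S.sym z))
      rw [h, ← mul_assoc, inv_mul_cancel, one_mul]
  | one => simp
  | mul g h _ _ ihg ihh =>
      have : (unop (g * h)) x = (unop h) ((unop g) x) := rfl
      rw [this, ihh, ihg]
      group
  | inv g _ ihg =>
      have h := ihg ((unop g⁻¹) x)
      have : (unop g) ((unop g⁻¹) x) = x := by
        exact (unop g).apply_symm_apply x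
      rw [this] at h
      rw [h]; group

lemma symInn_ract (g : S.Inn) (x : Q) :
    S.symInn (S.ract x g) = g⁻¹ * S.symInn x * g := by
  apply Subtype.ext
  exact conj_sym S (↑g) g.2 x

lemma ract_inv' (q x : Q) : S.ract q (S.symInn x)⁻¹ = S.inv q x := rfl

lemma wd_act (N : Subgroup S.Inn) (hN : N.Normal) : ∀ a b : Q, (S.orbRel N).r a b → ∀ c d : Q, (S.orbRel N).r c d →
    (S.orbRel N).r (S.act a c) (S.act b d) := by
  rintro a _ ⟨n, rfl⟩ c _ ⟨m, rfl⟩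
  have h1 : (S.symInn c)⁻¹ * ((n : S.Inn) * (m : S.Inn)⁻¹) * S.symInn c ∈ N :=
    hN.conj_mem' _ (mul_mem n.2 (inv_mem m.2)) _
  have h2 : (S.symInn c)⁻¹ * ((n : S.Inn) * (m : S.Inn)⁻¹) * S.symInn c * (m : S.Inn) ∈ N :=
    mul_mem h1 m.2
  refine ⟨⟨_, h2⟩, ?_⟩
  have hk : S.symInn c * ((S.symInn c)⁻¹ * ((n : S.Inn) * (m : S.Inn)⁻¹) * S.symInn c * (m : S.Inn))
      = (n : S.Inn) * S.symInn (S.ract c ↑m) := by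
    rw [symInn_ract S]; group
  exact congrArg (S.ract a) hk

lemma wd_inv (N : Subgroup S.Inn) (hN : N.Normal) : ∀ a b : Q, (S.orbRel N).r a b → ∀ c d : Q, (S.orbRel N).r c d →
    (S.orbRel N).r (S.inv a c) (S.inv b d) := by
  rintro a _ ⟨n, rfl⟩ c _ ⟨m, rfl⟩
  have h1 : S.symInn c * ((n : S.Inn) * (m : S.Inn)⁻¹) * (S.symInn c)⁻¹ ∈ N :=
    hN.conj_mem _ (mul_mem n.2 (inv_mem m.2)) _
  have h2 : S.symInn c * ((n : S.Inn) * (m : S.Inn)⁻¹) * (S.symInn c)⁻¹ * (m : S.Inn) ∈ N :=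
    mul_mem h1 m.2
  refine ⟨⟨_, h2⟩, ?_⟩
  have hk : (S.symInn c)⁻¹ * (S.symInn c * ((n : S.Inn) * (m : S.Inn)⁻¹) * (S.symInn c)⁻¹ * (m : S.Inn))
      = (n : S.Inn) * (S.symInn (S.ract c ↑m))⁻¹ := by
    rw [symInn_ract S]; group
  exact congrArg (S.ract a) hk
end Aux

/-- For `N ◁ Inn(Q)`, the set of `N`-orbits `Q/N` carries a
quandle structure with `[q] ▷ [r] = [q ▷ r]`, and the orbit map is a surjective
quandle homomorphism. -/
theorem orbit_quotient_quandle {Q : Type*} (S : QuandleStr Q)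
    (N : Subgroup S.Inn) (hN : N.Normal) :
    ∃ Qn : QuandleStr (Quotient (S.orbRel N)),
      (∀ q r : Q,
        Qn.act (Quotient.mk (S.orbRel N) q) (Quotient.mk (S.orbRel N) r) =
          Quotient.mk (S.orbRel N) (S.act q r)) ∧
      Function.Surjective (Quotient.mk (S.orbRel N)) := by
  refine ⟨{
    act := Quotient.map₂ S.act (wd_act S N hN)
    inv := Quotient.map₂ S.inv (wd_inv S N hN)
    idem := fun x => Quotient.inductionOn x fun a =>
      congrArg (Quotient.mk _) (S.idem a)
    inv_act := fun x y => Quotient.inductionOn₂ x y fun a b =>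
      congrArg (Quotient.mk _) (S.inv_act a b)
    act_inv := fun x y => Quotient.inductionOn₂ x y fun a b =>
      congrArg (Quotient.mk _) (S.act_inv a b)
    distrib := fun x y z => Quotient.inductionOn₃ x y z fun a b c =>
      congrArg (Quotient.mk _) (S.distrib a b c) },
    fun q r => rfl,
    fun x => Quotient.inductionOn x fun a => ⟨a, rfl⟩⟩
end

section
/- Let Q be a connected quandle, G = Inn(Q), q ∈ Q with stabilizer H and η = S_q ∈ Z(H), and let N ◁ G. In the orbit quotient Q/N with H₁ = HN/N the stabilizer of the image of q, the element ηN lies in the center Z(H₁), and for every g ∈ G the augmentation value of the coset H₁gN is g⁻¹ηgN; moreover G/N is generated by {g⁻¹ηgN : g ∈ G}. -/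
/-! Common setup: quandles with the right-action conventions of Joyce and of
Braun–Crotwell–Liu–Weston–Yetter.  The inner automorphism group is realized
inside the opposite of the permutation group, so that it acts on `Q` on the
right (the product `g * h` means "first `g`, then `h`"). -/

open MulOpposite

namespace QuandleStr

variable {Q : Type*} (S : QuandleStr Q)

lemma sym_apply (x a : Q) : S.sym x a = S.act a x := rfl

lemma ract_act (g : S.Inn) (a b : Q) :
    S.ract (S.act a b) g = S.act (S.ract a g) (S.ract b g) := by
  obtain ⟨g, hg⟩ := g
  revert a b
  refine Subgroup.closure_induction (p := fun (x : (Equiv.Perm Q)ᵐᵒᵖ) _ => ∀ a b : Q,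
      unop x (S.act a b) = S.act (unop x a) (unop x b)) ?_ ?_ ?_ ?_ hg
  · rintro x ⟨y, rfl⟩ a b
    exact S.distrib a b y
  · intro a b; rfl
  · intro x y _ _ hx hy a b
    show unop y (unop x (S.act a b)) = _
    rw [hx, hy]; rfl
  · intro x _ hx a b
    apply (unop x).injective
    show unop x (unop x⁻¹ (S.act a b)) = _
    rw [hx ((unop x⁻¹) a) ((unop x⁻¹) b)]
    simp [unop_inv]

lemma ract_symInn (a : Q) : S.ract a (S.symInn q) = S.act a q := rfl

lemma ract_inv_ract (a : Q) (g : S.Inn) : S.ract (S.ract a g⁻¹) g = a := by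
  rw [← ract_mul, inv_mul_cancel, ract_one]

lemma conj_symInn (q : Q) (g : S.Inn) (a : Q) :
    S.ract a (g⁻¹ * S.symInn q * g) = S.act a (S.ract q g) := by
  rw [ract_mul, ract_mul, ract_symInn, ract_act]
  rw [ract_inv_ract]

lemma inn_ext {g h : S.Inn} (H : ∀ a, S.ract a g = S.ract a h) : g = h :=
  Subtype.ext (unop_injective (Equiv.ext H))

lemma closure_symInn : Subgroup.closure (Set.range S.symInn) = ⊤ := by
  apply Subgroup.map_injective S.Inn.subtype_injective
  rw [MonoidHom.map_closure]
  have h1 : S.Inn.subtype '' Set.range S.symInn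
      = Set.range fun x => op (S.sym x) := by
    ext x
    constructor
    · rintro ⟨_, ⟨y, rfl⟩, rfl⟩; exact ⟨y, rfl⟩
    · rintro ⟨y, rfl⟩; exact ⟨S.symInn y, ⟨y, rfl⟩, rfl⟩
  have h2 : Subgroup.map S.Inn.subtype ⊤ = S.Inn :=
    (MonoidHom.range_eq_map _).symm.trans (Subgroup.subtype_range _)
  rw [h1, h2]
  rfl

end QuandleStr

/-- In the orbit quotient `Q/N` of a connected quandle, with
`H₁ = HN/N` the stabilizer of the image of `q` and `η = S_q`:
`ηN ∈ Z(H₁)`; the augmentation (symmetry) at the point corresponding to the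
coset `H₁gN` (i.e. at `[q·g]`) is given by the action of `g⁻¹ηg N`; and `G/N`
is generated by `{g⁻¹ηgN : g ∈ G}`. -/
theorem orbit_quotient_structure {Q : Type*} (S : QuandleStr Q)
    (hconn : S.Connected) (q : Q) (N : Subgroup S.Inn) [N.Normal]
    (Qn : QuandleStr (Quotient (S.orbRel N)))
    (hact : ∀ a b : Q,
      Qn.act (Quotient.mk (S.orbRel N) a) (Quotient.mk (S.orbRel N) b) =
        Quotient.mk (S.orbRel N) (S.act a b)) :
    (∃ hm : ((S.symInn q : S.Inn) : S.Inn ⧸ N) ∈ (S.stab q).map (QuotientGroup.mk' N),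
      (⟨_, hm⟩ : (S.stab q).map (QuotientGroup.mk' N)) ∈
        Subgroup.center ((S.stab q).map (QuotientGroup.mk' N))) ∧
    (∀ (g : S.Inn) (a : Q),
      Qn.act (Quotient.mk (S.orbRel N) a) (Quotient.mk (S.orbRel N) (S.ract q g)) =
        Quotient.mk (S.orbRel N) (S.ract a (g⁻¹ * S.symInn q * g))) ∧
    Subgroup.closure {x : S.Inn ⧸ N | ∃ g : S.Inn,
        x = ((g⁻¹ * S.symInn q * g : S.Inn) : S.Inn ⧸ N)} = ⊤ := by
  have hstab : S.symInn q ∈ S.stab q := show S.act q q = q from S.idem q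
  have hcomm : ∀ h ∈ S.stab q, S.symInn q * h = h * S.symInn q := by
    intro h hh
    apply S.inn_ext
    intro a
    rw [S.ract_mul, S.ract_mul, S.ract_symInn, S.ract_symInn, S.ract_act,
      show S.ract q h = q from hh]
  refine ⟨⟨⟨S.symInn q, hstab, rfl⟩, ?_⟩, ?_, ?_⟩
  · rw [Subgroup.mem_center_iff]
    rintro ⟨x, hx⟩
    obtain ⟨h, hh, rfl⟩ := hx
    apply Subtype.ext
    show QuotientGroup.mk' N h * QuotientGroup.mk' N (S.symInn q)
      = QuotientGroup.mk' N (S.symInn q) * QuotientGroup.mk' N h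
    rw [← map_mul, ← map_mul, hcomm h hh]
  · intro g a
    rw [hact]
    exact congrArg _ (S.conj_symInn q g a).symm
  · rw [eq_top_iff]
    rintro x -
    obtain ⟨g, rfl⟩ := QuotientGroup.mk'_surjective N x
    have hg : g ∈ Subgroup.closure (Set.range S.symInn) :=
      S.closure_symInn ▸ Subgroup.mem_top g
    have hle : Subgroup.closure (Set.range S.symInn) ≤
        Subgroup.comap (QuotientGroup.mk' N)
          (Subgroup.closure {x : S.Inn ⧸ N | ∃ g : S.Inn,
            x = ((g⁻¹ * S.symInn q * g : S.Inn) : S.Inn ⧸ N)}) := by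
      rw [Subgroup.closure_le]
      rintro _ ⟨y, rfl⟩
      obtain ⟨g', hg'⟩ := hconn q y
      have hy : S.symInn y = g'⁻¹ * S.symInn q * g' := by
        apply S.inn_ext
        intro a
        rw [S.conj_symInn, hg', S.ract_symInn]
      exact Subgroup.subset_closure ⟨g', by rw [hy]; rfl⟩
    exact hle hg
end
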